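/- (Corollary 1) Let Λ be a finite metric space of sites with local dimension d ≥ 1 and onsite symmetry (G, u). Let Ω assign real numbers Ω_{A,B}(U) to subsets A, B ⊆ Λ and G-symmetric unitaries U, satisfying: (1) Ω_{A,B}(V·U) = Ω_{A,B}(U) for every G-symmetric unitary V supported on A or on Λ∖A, and (2) Ω_{A,B}(U·V) = Ω_{A,B}(U) for every G-symmetric unitary V supported on B or on Λ∖B. Let U be a G-symmetric strict LPU with operator spreading length ξ and W a G-symmetric FDLU of depth n with gates of radius λ. If (∂_{2nλ} A) ∩ (∂_{2nλ+ξ} B) = ∅, then Ω_{A,B}(W·U) = Ω_{A,B}(U). -/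

import Mathlib

open Matrix

/-- A matrix on the many-body space `ι = Λ → Fin d` is supported on `S ⊆ Λ` if its entries
vanish whenever the two configurations differ at a site outside `S`, and otherwise depend
only on the restrictions of the configurations to `S`. -/
def SupportedOn {Λ : Type*} {d : ℕ} (S : Set Λ)
    (M : Matrix (Λ → Fin d) (Λ → Fin d) ℂ) : Prop :=
  (∀ x y, (∃ r ∉ S, x r ≠ y r) → M x y = 0) ∧
  (∀ x y x' y', (∀ r ∈ S, x r = x' r) → (∀ r ∈ S, y r = y' r) →
    (∀ r ∉ S, x r = y r) → (∀ r ∉ S, x' r = y' r) → M x y = M x' y')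

/-- A matrix is unitary if `Mᴴ M = 1 = M Mᴴ`. -/
def IsUnitaryMat {ι : Type*} [Fintype ι] [DecidableEq ι] (M : Matrix ι ι ℂ) : Prop :=
  Mᴴ * M = 1 ∧ M * Mᴴ = 1

/-- The global onsite symmetry operator `U_g`, with entries `∏_r u(g)_{x(r),y(r)}`. -/
def symOp {Λ : Type*} [Fintype Λ] {d : ℕ} {G : Type*}
    (u : G → Matrix (Fin d) (Fin d) ℂ) (g : G) :
    Matrix (Λ → Fin d) (Λ → Fin d) ℂ :=
  Matrix.of fun x y => ∏ r, u g (x r) (y r)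

/-- A matrix is `G`-symmetric if it commutes with every global symmetry operator. -/
def IsGSymm {Λ : Type*} [Fintype Λ] [DecidableEq Λ] {d : ℕ} {G : Type*}
    (u : G → Matrix (Fin d) (Fin d) ℂ)
    (M : Matrix (Λ → Fin d) (Λ → Fin d) ℂ) : Prop :=
  ∀ g, M * symOp u g = symOp u g * M

/-- The `ℓ`-thickened boundary `∂_ℓ S = {r : dist(r,S) ≤ ℓ and dist(r,Λ∖S) ≤ ℓ}`. -/
def thickBd {Λ : Type*} [MetricSpace Λ] (ℓ : ℝ) (S : Set Λ) : Set Λ :=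
  {r | (∃ s ∈ S, dist r s ≤ ℓ) ∧ (∃ s ∈ Sᶜ, dist r s ≤ ℓ)}

/-- A strict locality-preserving unitary with operator spreading length `ξ`: conjugation
maps any operator supported on a single site `r` to one supported in the closed ball of
radius `ξ` around `r`. -/
def IsStrictLPU {Λ : Type*} [Fintype Λ] [DecidableEq Λ] [MetricSpace Λ] {d : ℕ}
    (ξ : ℝ) (U : Matrix (Λ → Fin d) (Λ → Fin d) ℂ) : Prop :=
  IsUnitaryMat U ∧ ∀ (r : Λ) (O : Matrix (Λ → Fin d) (Λ → Fin d) ℂ),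
    SupportedOn {r} O → SupportedOn (Metric.closedBall r ξ) (Uᴴ * O * U)

/-!
The gates of `W` are peeled off one at a time, leftmost first. A gate `g` centred at `c` whose
ball lies in `A` or in `Aᶜ` is removed by flow property (1). Otherwise `c ∈ ∂_{2nλ} A`, so
`c ∉ ∂_{2nλ+ξ} B`. Write `g X = X (X† g X)`, where `X` is the rest of the circuit times `U`.
The conjugate `X† g X` is supported within distance `λ + 2(n-1)λ + ξ` of `c`: `g` commutes
with the other gates of its layer, each later layer spreads its support by `2λ`, and `U`
spreads it by `ξ`. That ball lies in `B` or in `Bᶜ`, so property (2) removes `X† g X`.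
The bound for `U` uses the fact that operators supported on `S` are generated, as an
algebra, by single-site operators at the sites of `S`.
-/

open Metric

section SupportedOn

variable {Λ : Type*} {d : ℕ} {S T : Set Λ} {M N : Matrix (Λ → Fin d) (Λ → Fin d) ℂ}

theorem SupportedOn.apply_eq_apply (hM : SupportedOn S M) {x y x' y' : Λ → Fin d}
    (hx : ∀ r ∈ S, x r = x' r) (hy : ∀ r ∈ S, y r = y' r)
    (hxy : ∀ r ∉ S, (x r = y r ↔ x' r = y' r)) : M x y = M x' y' := by
  by_cases h : ∀ r ∉ S, x r = y r
  · exact hM.2 x y x' y' hx hy h fun r hr => (hxy r hr).1 (h r hr)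
  · push Not at h
    obtain ⟨r, hr, hne⟩ := h
    rw [hM.1 x y ⟨r, hr, hne⟩, hM.1 x' y' ⟨r, hr, mt (hxy r hr).2 hne⟩]

theorem SupportedOn.mono (hM : SupportedOn S M) (hST : S ⊆ T) : SupportedOn T M := by
  refine ⟨fun x y ⟨r, hr, hne⟩ => hM.1 x y ⟨r, fun h => hr (hST h), hne⟩,
    fun x y x' y' hx hy hxy hx'y' => hM.apply_eq_apply (fun r hr => hx r (hST hr))
      (fun r hr => hy r (hST hr)) fun r _ => ?_⟩
  by_cases hrT : r ∈ T
  · rw [hx r hrT, hy r hrT]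
  · exact iff_of_true (hxy r hrT) (hx'y' r hrT)

theorem SupportedOn.conjTranspose (hM : SupportedOn S M) : SupportedOn S Mᴴ :=
  ⟨fun x y ⟨r, hr, hne⟩ => by
    rw [conjTranspose_apply, hM.1 y x ⟨r, hr, Ne.symm hne⟩, star_zero],
   fun x y x' y' hx hy hxy hx'y' => by
    rw [conjTranspose_apply, conjTranspose_apply, hM.apply_eq_apply hy hx fun r hr =>
      iff_of_true (hxy r hr).symm (hx'y' r hr).symm]⟩

theorem SupportedOn.add (hM : SupportedOn S M) (hN : SupportedOn S N) :
    SupportedOn S (M + N) :=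
  ⟨fun x y h => by rw [Matrix.add_apply, hM.1 x y h, hN.1 x y h, add_zero],
   fun x y x' y' hx hy hxy hx'y' => by
    rw [Matrix.add_apply, Matrix.add_apply, hM.2 x y x' y' hx hy hxy hx'y',
      hN.2 x y x' y' hx hy hxy hx'y']⟩

theorem supportedOn_smul_one [Fintype Λ] (S : Set Λ) (c : ℂ) :
    SupportedOn S (c • 1 : Matrix (Λ → Fin d) (Λ → Fin d) ℂ) := by
  refine ⟨fun x y ⟨r, _, hne⟩ => ?_, fun x y x' y' hx hy hxy hx'y' => ?_⟩
  · rw [Matrix.smul_apply, one_apply_ne fun h => hne (congrFun h r), smul_zero]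
  · have h : x = y ↔ x' = y' := by
      simp only [funext_iff]
      refine forall_congr' fun r => ?_
      by_cases hr : r ∈ S
      · rw [hx r hr, hy r hr]
      · exact iff_of_true (hxy r hr) (hx'y' r hr)
    simp only [Matrix.smul_apply, one_apply, h]

variable [Fintype Λ] [DecidableEq Λ]

theorem SupportedOn.mul (hM : SupportedOn S M) (hN : SupportedOn T N) :
    SupportedOn (S ∪ T) (M * N) := by
  classical
  constructor
  · rintro x y ⟨r, hr, hne⟩
    rw [mul_apply]
    refine Finset.sum_eq_zero fun z _ => ?_
    by_cases hxz : x r = z r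
    · rw [hN.1 z y ⟨r, fun h => hr (.inr h), hxz ▸ hne⟩, mul_zero]
    · rw [hM.1 x z ⟨r, fun h => hr (.inl h), hxz⟩, zero_mul]
  · intro x y x' y' hx hy hxy hx'y'
    -- off `S ∪ T`, swapping the values `x r` and `x' r` of the intermediate configuration
    -- matches the terms of the two sums
    let σ : (Λ → Fin d) → (Λ → Fin d) :=
      fun z r => if r ∈ S ∪ T then z r else Equiv.swap (x r) (x' r) (z r)
    have hσ : σ.Involutive := fun z => funext fun r => by
      by_cases hr : r ∈ S ∪ T <;> simp only [σ, hr, if_true, if_false, Equiv.swap_apply_self]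
    have hσ_out : ∀ z, ∀ r ∉ S ∪ T, (z r = x r ↔ σ z r = x' r) := fun z r hr => by
      simp only [σ, if_neg hr, Equiv.swap_apply_eq_iff, Equiv.swap_apply_right]
    have hterm : ∀ z, M x z * N z y = M x' (σ z) * N (σ z) y' := fun z => by
      congr 1
      · refine hM.apply_eq_apply (fun r hr => hx r (.inl hr))
          (fun r hr => (if_pos (.inl hr)).symm) fun r hr => ?_
        by_cases hrST : r ∈ S ∪ T
        · simp only [σ, if_pos hrST, hx r hrST]
        · rw [eq_comm, hσ_out z r hrST, eq_comm]
      · refine hN.apply_eq_apply (fun r hr => (if_pos (.inr hr)).symm)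
          (fun r hr => hy r (.inr hr)) fun r hr => ?_
        by_cases hrST : r ∈ S ∪ T
        · simp only [σ, if_pos hrST, hy r hrST]
        · rw [← hxy r hrST, ← hx'y' r hrST, hσ_out z r hrST]
    simp only [mul_apply]
    rw [Finset.sum_congr rfl fun z _ => hterm z]
    exact hσ.bijective.sum_comp fun z => M x' z * N z y'

theorem SupportedOn.mul_apply_of_disjoint (hM : SupportedOn S M) (hN : SupportedOn T N)
    (hST : Disjoint S T) (x y : Λ → Fin d) [DecidablePred (· ∈ S)] :
    (M * N) x y = M x (S.piecewise y x) * N (S.piecewise y x) y := by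
  rw [mul_apply]
  refine Finset.sum_eq_single _ (fun z _ hz => ?_) (by simp)
  obtain ⟨r, hr⟩ := Function.ne_iff.mp hz
  by_cases hrS : r ∈ S
  · rw [Set.piecewise_eq_of_mem _ _ _ hrS] at hr
    rw [hN.1 z y ⟨r, Set.disjoint_left.mp hST hrS, hr⟩, mul_zero]
  · rw [Set.piecewise_eq_of_notMem _ _ _ hrS] at hr
    rw [hM.1 x z ⟨r, hrS, Ne.symm hr⟩, zero_mul]

theorem SupportedOn.commute (hM : SupportedOn S M) (hN : SupportedOn T N) (hST : Disjoint S T) :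
    Commute M N := by
  classical
  ext x y
  by_cases hxy : ∀ r ∉ S ∪ T, x r = y r
  · have hS : ∀ r ∈ S, r ∉ T := fun r hr => Set.disjoint_left.mp hST hr
    have hT : ∀ r ∈ T, r ∉ S := fun r hr => Set.disjoint_right.mp hST hr
    have hMeq : M x (S.piecewise y x) = M (T.piecewise y x) y := by
      refine hM.apply_eq_apply (fun r hr => (Set.piecewise_eq_of_notMem _ _ _ (hS r hr)).symm)
        (fun r hr => Set.piecewise_eq_of_mem _ _ _ hr) fun r hr => iff_of_true
          (Set.piecewise_eq_of_notMem _ _ _ hr).symm ?_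
      by_cases hrT : r ∈ T
      · exact Set.piecewise_eq_of_mem _ _ _ hrT
      · rw [Set.piecewise_eq_of_notMem _ _ _ hrT, hxy r (by simp [hr, hrT])]
    have hNeq : N (S.piecewise y x) y = N x (T.piecewise y x) := by
      refine hN.apply_eq_apply (fun r hr => Set.piecewise_eq_of_notMem _ _ _ (hT r hr))
        (fun r hr => (Set.piecewise_eq_of_mem _ _ _ hr).symm) fun r hr => iff_of_true
          ?_ (Set.piecewise_eq_of_notMem _ _ _ hr).symm
      by_cases hrS : r ∈ S
      · exact Set.piecewise_eq_of_mem _ _ _ hrS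
      · rw [Set.piecewise_eq_of_notMem _ _ _ hrS, hxy r (by simp [hr, hrS])]
    rw [hM.mul_apply_of_disjoint hN hST, hN.mul_apply_of_disjoint hM hST.symm, hMeq, hNeq, mul_comm]
  · push Not at hxy
    obtain ⟨r, hr, hne⟩ := hxy
    rw [(hM.mul hN).1 x y ⟨r, hr, hne⟩, (hN.mul hM).1 x y ⟨r, by rwa [Set.union_comm], hne⟩]

variable (d) in
def supportedSubalgebra (S : Set Λ) : Subalgebra ℂ (Matrix (Λ → Fin d) (Λ → Fin d) ℂ) where
  carrier := {M | SupportedOn S M}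
  mul_mem' hM hN := by simpa using hM.mul hN
  add_mem' := SupportedOn.add
  algebraMap_mem' c := by
    simpa [Algebra.algebraMap_eq_smul_one] using supportedOn_smul_one S c

@[simp]
theorem mem_supportedSubalgebra : M ∈ supportedSubalgebra d S ↔ SupportedOn S M := Iff.rfl

end SupportedOn

section SiteUnit
variable {Λ : Type*} [Fintype Λ] [DecidableEq Λ] {d : ℕ} {S : Set Λ}
  {M : Matrix (Λ → Fin d) (Λ → Fin d) ℂ}

/-- The operator `|p⟩⟨q|` at site `r`, tensored with the identity elsewhere. -/
def siteUnit (r : Λ) (p q : Fin d) : Matrix (Λ → Fin d) (Λ → Fin d) ℂ :=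
  Matrix.of fun x y => if x r = p ∧ y = Function.update x r q then 1 else 0

theorem supportedOn_siteUnit (r : Λ) (p q : Fin d) : SupportedOn {r} (siteUnit r p q) := by
  refine ⟨fun x y ⟨s, hs, hne⟩ => if_neg ?_, fun x y x' y' hx hy hxy hx'y' => ?_⟩
  · rintro ⟨-, rfl⟩
    exact hne (Function.update_of_ne hs q x).symm
  · simp only [siteUnit, of_apply, Function.eq_update_iff]
    have hxy' : ∀ s ≠ r, y s = x s := fun s hs => (hxy s hs).symm
    have hx'y'' : ∀ s ≠ r, y' s = x' s := fun s hs => (hx'y' s hs).symm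
    simp +contextual [hx r rfl, hy r rfl, hxy', hx'y'']

theorem siteUnit_mul_apply (r : Λ) (p q : Fin d) (P : Matrix (Λ → Fin d) (Λ → Fin d) ℂ)
    (x y : Λ → Fin d) :
    (siteUnit r p q * P) x y = if x r = p then P (Function.update x r q) y else 0 := by
  by_cases h : x r = p <;> simp [mul_apply, siteUnit, h]

theorem list_prod_siteUnit_apply {l : List Λ} (hl : l.Nodup) (a b x y : Λ → Fin d) :
    (l.map fun r => siteUnit r (a r) (b r)).prod x y =
      if (∀ r ∈ l, x r = a r) ∧ y = (fun r => if r ∈ l then b r else x r) then 1 else 0 := by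
  induction l generalizing x with
  | nil => simp [one_apply, eq_comm]
  | cons r t ih =>
    obtain ⟨hr, ht⟩ := List.nodup_cons.mp hl
    have hupd : (fun s => if s ∈ t then b s else Function.update x r (b r) s) =
        fun s => if s ∈ r :: t then b s else x s := by
      funext s
      by_cases hs : s = r
      · subst hs; simp [hr]
      · simp [hs]
    have hupd' : ∀ s ∈ t, Function.update x r (b r) s = x s := fun s hs =>
      Function.update_of_ne (by rintro rfl; exact hr hs) _ _
    rw [List.map_cons, List.prod_cons, siteUnit_mul_apply, ih ht, hupd]
    by_cases hxr : x r = a r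
    · simp +contextual [hxr, hupd']
    · simp [hxr]

variable [NeZero d]

theorem SupportedOn.eq_sum_smul_list_prod_siteUnit {l : List Λ} (hl : l.Nodup)
    (hM : SupportedOn {r | r ∈ l} M) :
    M = ∑ a, ∑ b, (if (∀ r ∉ l, a r = 0) ∧ ∀ r ∉ l, b r = 0 then M a b else 0) •
      (l.map fun r => siteUnit r (a r) (b r)).prod := by
  ext x y
  simp only [Matrix.sum_apply, Matrix.smul_apply, list_prod_siteUnit_apply hl, smul_eq_mul]
  -- the only contributing term is `a = x₀`, `b = y₀`
  set x₀ : Λ → Fin d := fun r => if r ∈ l then x r else 0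
  set y₀ : Λ → Fin d := fun r => if r ∈ l then y r else 0
  have hx₀ : ∀ a, ((∀ r ∉ l, a r = 0) ∧ ∀ r ∈ l, x r = a r) ↔ a = x₀ := by
    simp only [x₀, funext_iff]; grind
  have hy₀ : ∀ b, ((∀ r ∉ l, b r = 0) ∧ y = fun r => if r ∈ l then b r else x r) ↔
      b = y₀ ∧ ∀ r ∉ l, x r = y r := by
    simp only [y₀, funext_iff]; grind
  have hcond : ∀ a b, (((∀ r ∉ l, a r = 0) ∧ ∀ r ∉ l, b r = 0) ∧
      (∀ r ∈ l, x r = a r) ∧ y = fun r => if r ∈ l then b r else x r) ↔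
      a = x₀ ∧ b = y₀ ∧ ∀ r ∉ l, x r = y r := by
    intro a b
    rw [← hx₀, ← and_assoc, ← hy₀]
    tauto
  simp_rw [ite_zero_mul_ite_zero, mul_one, hcond, ite_and]
  simp only [Finset.sum_ite_irrel, Finset.sum_ite_eq', Finset.mem_univ, if_true,
    Finset.sum_const_zero]
  split_ifs with hxy
  · exact (hM.2 _ _ _ _ (fun r hr => if_pos hr) (fun r hr => if_pos hr)
      (fun r hr => by simp [hr]) hxy).symm
  · push Not at hxy
    obtain ⟨r, hr, hne⟩ := hxy
    exact hM.1 x y ⟨r, hr, hne⟩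

theorem SupportedOn.mem_adjoin_singleSite (hM : SupportedOn S M) :
    M ∈ Algebra.adjoin ℂ {O | ∃ r ∈ S, SupportedOn {r} O} := by
  classical
  set l := (Finset.univ.filter (· ∈ S)).toList
  have hl : {r | r ∈ l} = S := by ext r; simp [l]
  rw [← hl] at hM
  rw [hM.eq_sum_smul_list_prod_siteUnit (Finset.nodup_toList _)]
  refine Subalgebra.sum_mem _ fun a _ => Subalgebra.sum_mem _ fun b _ =>
    Subalgebra.smul_mem _ (Subalgebra.list_prod_mem _ fun O hO => ?_) _
  obtain ⟨r, hr, rfl⟩ := List.mem_map.mp hO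
  exact Algebra.subset_adjoin ⟨r, hl ▸ hr, supportedOn_siteUnit r _ _⟩

end SiteUnit

theorem IsStrictLPU.supportedOn_conj {Λ : Type*} [Fintype Λ] [DecidableEq Λ] [MetricSpace Λ]
    {d : ℕ} [NeZero d] {ξ : ℝ} {U M : Matrix (Λ → Fin d) (Λ → Fin d) ℂ} (hU : IsStrictLPU ξ U)
    {S T : Set Λ} (hM : SupportedOn S M) (hST : ∀ r ∈ S, closedBall r ξ ⊆ T) :
    SupportedOn T (Uᴴ * M * U) := by
  let conj := (Unitary.conjStarAlgAut ℂ _ (star ⟨U, hU.1⟩)).toAlgEquiv.toAlgHom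
  have hconj : ∀ O, conj O = Uᴴ * O * U := fun O => by
    simp [conj, Matrix.star_eq_conjTranspose]
  have hle : Algebra.adjoin ℂ {O | ∃ r ∈ S, SupportedOn {r} O} ≤
      (supportedSubalgebra d T).comap conj :=
    Algebra.adjoin_le fun O ⟨r, hr, hO⟩ => by
      simpa [hconj] using (hU.2 r O hO).mono (hST r hr)
  simpa [hconj] using hle hM.mem_adjoin_singleSite

section SymmetricUnitary
variable {Λ : Type*} [Fintype Λ] [DecidableEq Λ] {d : ℕ} {G : Type*}
  (u : G → Matrix (Fin d) (Fin d) ℂ) {M : Matrix (Λ → Fin d) (Λ → Fin d) ℂ}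

def symUnitary : Submonoid (Matrix (Λ → Fin d) (Λ → Fin d) ℂ) :=
  unitary _ ⊓ Submonoid.centralizer (Set.range (symOp u))

variable {u}

theorem mem_symUnitary_iff : M ∈ symUnitary u ↔ IsUnitaryMat M ∧ IsGSymm u M := by
  simp only [symUnitary, Submonoid.mem_inf, Submonoid.mem_centralizer_iff, Set.forall_mem_range,
    IsGSymm, eq_comm]
  rfl

theorem star_mem_symUnitary (hM : M ∈ symUnitary u) : star M ∈ symUnitary u := by
  refine ⟨Unitary.star_mem hM.1, Submonoid.mem_centralizer_iff.mpr fun s hs => ?_⟩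
  have h : Commute (Unitary.toUnits ⟨M, hM.1⟩ : Matrix (Λ → Fin d) (Λ → Fin d) ℂ) s :=
    (Submonoid.mem_centralizer_iff.mp hM.2 s hs).symm
  simpa using h.units_inv_left.symm.eq

end SymmetricUnitary

theorem conj_mul_eq_conj_conj {n α : Type*} [Fintype n] [Semiring α] [StarRing α]
    (A B M : Matrix n n α) :
    (A * B)ᴴ * M * (A * B) = Bᴴ * (Aᴴ * M * A) * B := by
  simp only [conjTranspose_mul, Matrix.mul_assoc]

section LayerProd
variable {Λ : Type*} [Fintype Λ] [DecidableEq Λ] {d : ℕ}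
  {L : List (Matrix (Λ → Fin d) (Λ → Fin d) ℂ × Λ)}

def layerProd (L : List (Matrix (Λ → Fin d) (Λ → Fin d) ℂ × Λ)) :
    Matrix (Λ → Fin d) (Λ → Fin d) ℂ :=
  (L.map Prod.fst).prod

@[simp]
theorem layerProd_nil : layerProd ([] : List (Matrix (Λ → Fin d) (Λ → Fin d) ℂ × Λ)) = 1 := rfl

@[simp]
theorem layerProd_cons (p : Matrix (Λ → Fin d) (Λ → Fin d) ℂ × Λ) (L) :
    layerProd (p :: L) = p.1 * layerProd L := rfl

theorem layerProd_mem {K : Submonoid (Matrix (Λ → Fin d) (Λ → Fin d) ℂ)}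
    (h : ∀ p ∈ L, p.1 ∈ K) : layerProd L ∈ K :=
  K.list_prod_mem (by simpa using h)

def circuitProd (LL : List (List (Matrix (Λ → Fin d) (Λ → Fin d) ℂ × Λ))) :
    Matrix (Λ → Fin d) (Λ → Fin d) ℂ :=
  (LL.map layerProd).prod

@[simp]
theorem circuitProd_nil :
    circuitProd ([] : List (List (Matrix (Λ → Fin d) (Λ → Fin d) ℂ × Λ))) = 1 := rfl

@[simp]
theorem circuitProd_cons (L) (LL : List (List (Matrix (Λ → Fin d) (Λ → Fin d) ℂ × Λ))) :
    circuitProd (L :: LL) = layerProd L * circuitProd LL := rfl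

theorem circuitProd_mem {K : Submonoid (Matrix (Λ → Fin d) (Λ → Fin d) ℂ)}
    {LL : List (List (Matrix (Λ → Fin d) (Λ → Fin d) ℂ × Λ))}
    (h : ∀ L ∈ LL, ∀ p ∈ L, p.1 ∈ K) : circuitProd LL ∈ K :=
  K.list_prod_mem (by simpa using fun L hL => layerProd_mem (h L hL))

end LayerProd

section GateLayer
variable {Λ : Type*} [Fintype Λ] [DecidableEq Λ] [MetricSpace Λ] {d : ℕ} {lam : ℝ}
  {L : List (Matrix (Λ → Fin d) (Λ → Fin d) ℂ × Λ)} {M : Matrix (Λ → Fin d) (Λ → Fin d) ℂ}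

/-- A gate is a pair `(V, c)` of a unitary and the centre of the ball it is supported in. -/
def IsGateLayer (lam : ℝ) (L : List (Matrix (Λ → Fin d) (Λ → Fin d) ℂ × Λ)) : Prop :=
  (∀ p ∈ L, IsUnitaryMat p.1 ∧ SupportedOn (closedBall p.2 lam) p.1) ∧
    L.Pairwise fun p q => Disjoint (closedBall p.2 lam) (closedBall q.2 lam)

theorem isGateLayer_ofFn {m : ℕ} {V : Fin m → Matrix (Λ → Fin d) (Λ → Fin d) ℂ} {c : Fin m → Λ}
    (hunit : ∀ j, IsUnitaryMat (V j)) (hsupp : ∀ j, SupportedOn (closedBall (c j) lam) (V j))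
    (hdisj : ∀ j j', j ≠ j' → Disjoint (closedBall (c j) lam) (closedBall (c j') lam)) :
    IsGateLayer lam (List.ofFn fun j => (V j, c j)) := by
  refine ⟨fun p hp => ?_, List.pairwise_ofFn.mpr fun j j' h => hdisj j j' h.ne⟩
  obtain ⟨j, rfl⟩ := List.mem_ofFn.mp hp
  exact ⟨hunit j, hsupp j⟩

theorem IsGateLayer.of_cons {p} (hL : IsGateLayer lam (p :: L)) : IsGateLayer lam L :=
  ⟨fun q hq => hL.1 q (.tail p hq), (List.pairwise_cons.mp hL.2).2⟩

theorem IsGateLayer.supportedOn_conj (hL : IsGateLayer lam L) {T : Set Λ}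
    (hM : SupportedOn T M) :
    SupportedOn (T ∪ {x | ∃ p ∈ L, ¬Disjoint (closedBall p.2 lam) T ∧ x ∈ closedBall p.2 lam})
      ((layerProd L)ᴴ * M * layerProd L) := by
  induction L generalizing T M with
  | nil => simpa using hM
  | cons p L ih =>
    obtain ⟨hpu, hps⟩ := hL.1 p (.head L)
    have hpL := (List.pairwise_cons.mp hL.2).1
    rw [layerProd_cons, conj_mul_eq_conj_conj]
    by_cases hpT : Disjoint (closedBall p.2 lam) T
    · have hfix : p.1ᴴ * M * p.1 = M := by
        rw [Matrix.mul_assoc, ← (hps.commute hM hpT).eq, ← Matrix.mul_assoc, hpu.1, Matrix.one_mul]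
      rw [hfix]
      refine (ih hL.of_cons hM).mono (Set.union_subset_union_right _ ?_)
      rintro x ⟨q, hq, hqT, hx⟩
      exact ⟨q, .tail p hq, hqT, hx⟩
    · have hp : SupportedOn (T ∪ closedBall p.2 lam) (p.1ᴴ * M * p.1) :=
        ((hps.conjTranspose.mul hM).mul hps).mono <| Set.union_subset
          (Set.union_subset Set.subset_union_right Set.subset_union_left) Set.subset_union_right
      refine (ih hL.of_cons hp).mono (Set.union_subset ?_ ?_)
      · exact Set.union_subset_union_right _ fun x hx => ⟨p, .head L, hpT, hx⟩
      · rintro x ⟨q, hq, hqT, hx⟩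
        refine .inr ⟨q, .tail p hq, fun hqT' => hqT ?_, hx⟩
        exact Set.disjoint_union_right.mpr ⟨hqT', (hpL q hq).symm⟩

theorem IsGateLayer.supportedOn_conj_closedBall (hL : IsGateLayer lam L) (hlam : 0 ≤ lam)
    {c : Λ} {ρ : ℝ} (hM : SupportedOn (closedBall c ρ) M) :
    SupportedOn (closedBall c (ρ + 2 * lam)) ((layerProd L)ᴴ * M * layerProd L) := by
  refine (hL.supportedOn_conj hM).mono (Set.union_subset
    (closedBall_subset_closedBall (by linarith)) ?_)
  rintro x ⟨p, -, hpT, hx⟩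
  obtain ⟨y, hyp, hyc⟩ := Set.not_disjoint_iff.mp hpT
  rw [mem_closedBall] at hx hyp hyc ⊢
  calc dist x c ≤ dist x p.2 + dist p.2 y + dist y c := dist_triangle4 _ _ _ _
    _ ≤ ρ + 2 * lam := by rw [dist_comm p.2]; linarith

end GateLayer

section Circuit
variable {Λ : Type*} [Fintype Λ] [DecidableEq Λ] [MetricSpace Λ] {d : ℕ} {lam : ℝ}
  {LL : List (List (Matrix (Λ → Fin d) (Λ → Fin d) ℂ × Λ))}
  {M : Matrix (Λ → Fin d) (Λ → Fin d) ℂ}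

theorem supportedOn_conj_circuitProd (hLL : ∀ L ∈ LL, IsGateLayer lam L) (hlam : 0 ≤ lam)
    {c : Λ} {ρ : ℝ} (hM : SupportedOn (closedBall c ρ) M) :
    SupportedOn (closedBall c (ρ + 2 * LL.length * lam))
      ((circuitProd LL)ᴴ * M * circuitProd LL) := by
  induction LL generalizing ρ M with
  | nil => simpa using hM
  | cons L LL ih =>
    have h := ih (fun L' hL' => hLL L' (.tail L hL'))
      ((hLL L (.head LL)).supportedOn_conj_closedBall hlam hM)
    have hρ : ρ + 2 * (L :: LL).length * lam = ρ + 2 * lam + 2 * LL.length * lam := by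
      push_cast [List.length_cons]
      ring
    rwa [circuitProd_cons, conj_mul_eq_conj_conj, hρ]

end Circuit

theorem thickBd_mono {Λ : Type*} [MetricSpace Λ] {ℓ ℓ' : ℝ} (h : ℓ ≤ ℓ') (S : Set Λ) :
    thickBd ℓ S ⊆ thickBd ℓ' S :=
  fun _ ⟨⟨s, hs, hd⟩, ⟨s', hs', hd'⟩⟩ => ⟨⟨s, hs, hd.trans h⟩, ⟨s', hs', hd'.trans h⟩⟩

theorem closedBall_subset_or_subset_compl_of_notMem_thickBd {Λ : Type*} [MetricSpace Λ]
    {ℓ : ℝ} {S : Set Λ} {c : Λ} (hc : c ∉ thickBd ℓ S) :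
    closedBall c ℓ ⊆ S ∨ closedBall c ℓ ⊆ Sᶜ := by
  by_contra! h
  obtain ⟨s, hs, hsS⟩ := Set.not_subset.mp h.1
  obtain ⟨s', hs', hs'S⟩ := Set.not_subset.mp h.2
  rw [mem_closedBall, dist_comm] at hs hs'
  exact hc ⟨⟨s', not_not.mp hs'S, hs'⟩, ⟨s, hsS, hs⟩⟩

section Flow
variable {Λ : Type*} [Fintype Λ] [DecidableEq Λ] [MetricSpace Λ] {d : ℕ} {G : Type*}
  {u : G → Matrix (Fin d) (Fin d) ℂ} {Ω : Set Λ → Set Λ → Matrix (Λ → Fin d) (Λ → Fin d) ℂ → ℝ}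
  {A B : Set Λ} {lam ρ : ℝ}

/-- The flow properties (1) and (2) of `Ω`. -/
def IsFlowInvariant (u : G → Matrix (Fin d) (Fin d) ℂ)
    (Ω : Set Λ → Set Λ → Matrix (Λ → Fin d) (Λ → Fin d) ℂ → ℝ) : Prop :=
  ∀ A B U V, U ∈ symUnitary u → V ∈ symUnitary u →
    ((SupportedOn A V ∨ SupportedOn Aᶜ V) → Ω A B (V * U) = Ω A B U) ∧
    ((SupportedOn B V ∨ SupportedOn Bᶜ V) → Ω A B (U * V) = Ω A B U)

theorem IsFlowInvariant.apply_mul_eq (hΩ : IsFlowInvariant u Ω)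
    (hAB : Disjoint (thickBd lam A) (thickBd ρ B)) {g X : Matrix (Λ → Fin d) (Λ → Fin d) ℂ}
    (hg : g ∈ symUnitary u) (hX : X ∈ symUnitary u) {c : Λ}
    (hgc : SupportedOn (closedBall c lam) g) (hXgX : SupportedOn (closedBall c ρ) (Xᴴ * g * X)) :
    Ω A B (g * X) = Ω A B X := by
  by_cases hcA : c ∈ thickBd lam A
  · -- `g` straddles `A`, so `c` is far from the boundary of `B`: move `g` through `X`
    have hcB : c ∉ thickBd ρ B := Set.disjoint_left.mp hAB hcA
    have hgX : g * X = X * (Xᴴ * g * X) := by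
      rw [← Matrix.mul_assoc, ← Matrix.mul_assoc, (mem_symUnitary_iff.mp hX).1.2, Matrix.one_mul]
    have hQ : Xᴴ * g * X ∈ symUnitary u :=
      mul_mem (mul_mem (star_mem_symUnitary hX) hg) hX
    rw [hgX]
    refine (hΩ A B X _ hX hQ).2 ?_
    rcases closedBall_subset_or_subset_compl_of_notMem_thickBd hcB with h | h
    exacts [.inl (hXgX.mono h), .inr (hXgX.mono h)]
  · refine (hΩ A B X g hX hg).1 ?_
    rcases closedBall_subset_or_subset_compl_of_notMem_thickBd hcA with h | h
    exacts [.inl (hgc.mono h), .inr (hgc.mono h)]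

theorem IsFlowInvariant.apply_layerProd_mul (hΩ : IsFlowInvariant u Ω)
    (hAB : Disjoint (thickBd lam A) (thickBd ρ B))
    {L : List (Matrix (Λ → Fin d) (Λ → Fin d) ℂ × Λ)} (hL : IsGateLayer lam L)
    (hLG : ∀ p ∈ L, IsGSymm u p.1)
    {Y : Matrix (Λ → Fin d) (Λ → Fin d) ℂ} (hY : Y ∈ symUnitary u)
    (hspread : ∀ p ∈ L, SupportedOn (closedBall p.2 ρ) (Yᴴ * p.1 * Y)) :
    Ω A B (layerProd L * Y) = Ω A B Y := by
  induction L with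
  | nil => rw [layerProd_nil, Matrix.one_mul]
  | cons p L ih =>
    have hp : p.1 ∈ symUnitary u :=
      mem_symUnitary_iff.mpr ⟨(hL.1 p (.head L)).1, hLG p (.head L)⟩
    have hLu : layerProd L ∈ symUnitary u := layerProd_mem fun q hq =>
      mem_symUnitary_iff.mpr ⟨(hL.1 q (.tail p hq)).1, hLG q (.tail p hq)⟩
    have hcomm : Commute p.1 (layerProd L) := Commute.list_prod_right _ _ fun V hV => by
      obtain ⟨q, hq, rfl⟩ := List.mem_map.mp hV
      exact (hL.1 p (.head L)).2.commute (hL.1 q (.tail p hq)).2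
        ((List.pairwise_cons.mp hL.2).1 q hq)
    have hconj : (layerProd L * Y)ᴴ * p.1 * (layerProd L * Y) = Yᴴ * p.1 * Y := by
      rw [conj_mul_eq_conj_conj, Matrix.mul_assoc (layerProd L)ᴴ, hcomm.eq,
        ← Matrix.mul_assoc (layerProd L)ᴴ, (mem_symUnitary_iff.mp hLu).1.1, Matrix.one_mul]
    rw [layerProd_cons, Matrix.mul_assoc, hΩ.apply_mul_eq hAB hp (mul_mem hLu hY)
      (hL.1 p (.head L)).2 (hconj ▸ hspread p (.head L))]
    exact ih hL.of_cons (fun q hq => hLG q (.tail p hq)) fun q hq => hspread q (.tail p hq)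

theorem IsFlowInvariant.apply_circuitProd_mul [NeZero d] (hΩ : IsFlowInvariant u Ω)
    (hlam : 0 ≤ lam) {ξ : ℝ} {U : Matrix (Λ → Fin d) (Λ → Fin d) ℂ} (hU : IsStrictLPU ξ U)
    (hUG : IsGSymm u U) {LL : List (List (Matrix (Λ → Fin d) (Λ → Fin d) ℂ × Λ))}
    (hLL : ∀ L ∈ LL, IsGateLayer lam L ∧ ∀ p ∈ L, IsGSymm u p.1)
    (hAB : Disjoint (thickBd (2 * LL.length * lam) A) (thickBd (2 * LL.length * lam + ξ) B)) :
    Ω A B (circuitProd LL * U) = Ω A B U := by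
  induction LL with
  | nil => rw [circuitProd_nil, Matrix.one_mul]
  | cons L LL ih =>
    have hLL' : ∀ L' ∈ LL, IsGateLayer lam L' ∧ ∀ p ∈ L', IsGSymm u p.1 :=
      fun L' hL' => hLL L' (.tail L hL')
    have hlen : ((L :: LL).length : ℝ) = LL.length + 1 := by push_cast [List.length_cons]; rfl
    have hk : (0 : ℝ) ≤ LL.length := Nat.cast_nonneg _
    rw [hlen] at hAB
    have hY : circuitProd LL * U ∈ symUnitary u :=
      mul_mem (circuitProd_mem fun L' hL' p hp => mem_symUnitary_iff.mpr
        ⟨((hLL' L' hL').1.1 p hp).1, (hLL' L' hL').2 p hp⟩) (mem_symUnitary_iff.mpr ⟨hU.1, hUG⟩)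
    have hspread : ∀ p ∈ L, SupportedOn (closedBall p.2 (lam + 2 * LL.length * lam + ξ))
        ((circuitProd LL * U)ᴴ * p.1 * (circuitProd LL * U)) := fun p hp => by
      rw [conj_mul_eq_conj_conj]
      refine hU.supportedOn_conj (supportedOn_conj_circuitProd (fun L' hL' => (hLL' L' hL').1)
        hlam ((hLL L (.head LL)).1.1 p hp).2) fun r hr => closedBall_subset_closedBall' ?_
      rw [mem_closedBall] at hr
      linarith
    rw [circuitProd_cons, Matrix.mul_assoc, hΩ.apply_layerProd_mul
      (hAB.mono (thickBd_mono (by nlinarith) A) (thickBd_mono (by nlinarith) B))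
      (hLL L (.head LL)).1 (hLL L (.head LL)).2 hY hspread]
    exact ih hLL' (hAB.mono (thickBd_mono (by nlinarith) A) (thickBd_mono (by nlinarith) B))

end Flow

theorem flow_removal_FDLU_general
    {Λ : Type*} [Fintype Λ] [DecidableEq Λ] [MetricSpace Λ]
    {d : ℕ} (hd : 1 ≤ d) {G : Type*}
    (u : G → Matrix (Fin d) (Fin d) ℂ)
    (Ω : Set Λ → Set Λ → Matrix (Λ → Fin d) (Λ → Fin d) ℂ → ℝ)
    -- flow property (1)
    (hΩ1 : ∀ (A B : Set Λ) (U V : Matrix (Λ → Fin d) (Λ → Fin d) ℂ),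
      IsUnitaryMat U → IsGSymm u U → IsUnitaryMat V → IsGSymm u V →
      (SupportedOn A V ∨ SupportedOn Aᶜ V) → Ω A B (V * U) = Ω A B U)
    -- flow property (2)
    (hΩ2 : ∀ (A B : Set Λ) (U V : Matrix (Λ → Fin d) (Λ → Fin d) ℂ),
      IsUnitaryMat U → IsGSymm u U → IsUnitaryMat V → IsGSymm u V →
      (SupportedOn B V ∨ SupportedOn Bᶜ V) → Ω A B (U * V) = Ω A B U)
    (A B : Set Λ) (ξ lam : ℝ) (hlam : 0 ≤ lam)
    -- `U` is a `G`-symmetric strict LPU with operator spreading length `ξ`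
    (U : Matrix (Λ → Fin d) (Λ → Fin d) ℂ)
    (hU : IsStrictLPU ξ U) (hUG : IsGSymm u U)
    -- the gates of the `G`-symmetric FDLU `W` of depth `n` and radius `lam`
    (n : ℕ) (m : Fin n → ℕ) (c : (i : Fin n) → Fin (m i) → Λ)
    (V : (i : Fin n) → Fin (m i) → Matrix (Λ → Fin d) (Λ → Fin d) ℂ)
    (hVunit : ∀ i j, IsUnitaryMat (V i j))
    (hVG : ∀ i j, IsGSymm u (V i j))
    (hVsupp : ∀ i j, SupportedOn (Metric.closedBall (c i j) lam) (V i j))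
    (hVdisj : ∀ i (j j' : Fin (m i)), j ≠ j' →
      Disjoint (Metric.closedBall (c i j) lam) (Metric.closedBall (c i j') lam))
    -- the two thickened boundaries do not intersect
    (hempty : thickBd (2 * n * lam) A ∩ thickBd (2 * n * lam + ξ) B = ∅) :
    Ω A B ((List.ofFn (fun i : Fin n => (List.ofFn (V i.rev)).prod)).prod * U) =
      Ω A B U := by
  have : NeZero d := NeZero.of_pos hd
  have hΩ : IsFlowInvariant u Ω := fun A B U V hU hV => by
    rw [mem_symUnitary_iff] at hU hV
    exact ⟨hΩ1 A B U V hU.1 hU.2 hV.1 hV.2, hΩ2 A B U V hU.1 hU.2 hV.1 hV.2⟩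
  let LL := List.ofFn fun i : Fin n => List.ofFn fun j => (V i.rev j, c i.rev j)
  have hW : (List.ofFn fun i : Fin n => (List.ofFn (V i.rev)).prod).prod = circuitProd LL := by
    simp [LL, circuitProd, layerProd, List.map_ofFn, Function.comp_def]
  rw [hW]
  refine hΩ.apply_circuitProd_mul hlam hU hUG (fun L hL => ?_)
    (by simpa [LL, Set.disjoint_iff_inter_eq_empty] using hempty)
  obtain ⟨i, rfl⟩ := List.mem_ofFn.mp hL
  refine ⟨isGateLayer_ofFn (hVunit _) (hVsupp _) (hVdisj _), fun p hp => ?_⟩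
  obtain ⟨j, rfl⟩ := List.mem_ofFn.mp hp
  exact hVG _ j

/-- Corollary 1: if `(∂_{2nλ}A) ∩ (∂_{2nλ+ξ}B) = ∅` then `Ω_{A,B}(W·U) = Ω_{A,B}(U)` for any
`G`-symmetric FDLU `W` of depth `n` and radius `λ` and any `G`-symmetric strict LPU `U`
with operator spreading length `ξ`. -/
theorem flow_removal_FDLU
    {Λ : Type*} [Fintype Λ] [DecidableEq Λ] [MetricSpace Λ]
    {d : ℕ} (hd : 1 ≤ d) {G : Type*} [Group G]
    (u : G → Matrix (Fin d) (Fin d) ℂ)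
    (hu_unit : ∀ g, IsUnitaryMat (u g))
    (hu_mul : ∀ g h, u (g * h) = u g * u h)
    (Ω : Set Λ → Set Λ → Matrix (Λ → Fin d) (Λ → Fin d) ℂ → ℝ)
    -- flow property (1)
    (hΩ1 : ∀ (A B : Set Λ) (U V : Matrix (Λ → Fin d) (Λ → Fin d) ℂ),
      IsUnitaryMat U → IsGSymm u U → IsUnitaryMat V → IsGSymm u V →
      (SupportedOn A V ∨ SupportedOn Aᶜ V) → Ω A B (V * U) = Ω A B U)
    -- flow property (2)
    (hΩ2 : ∀ (A B : Set Λ) (U V : Matrix (Λ → Fin d) (Λ → Fin d) ℂ),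
      IsUnitaryMat U → IsGSymm u U → IsUnitaryMat V → IsGSymm u V →
      (SupportedOn B V ∨ SupportedOn Bᶜ V) → Ω A B (U * V) = Ω A B U)
    (A B : Set Λ) (ξ lam : ℝ) (hξ : 0 ≤ ξ) (hlam : 0 ≤ lam)
    -- `U` is a `G`-symmetric strict LPU with operator spreading length `ξ`
    (U : Matrix (Λ → Fin d) (Λ → Fin d) ℂ)
    (hU : IsStrictLPU ξ U) (hUG : IsGSymm u U)
    -- the gates of the `G`-symmetric FDLU `W` of depth `n` and radius `lam`
    (n : ℕ) (m : Fin n → ℕ) (c : (i : Fin n) → Fin (m i) → Λ)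
    (V : (i : Fin n) → Fin (m i) → Matrix (Λ → Fin d) (Λ → Fin d) ℂ)
    (hVunit : ∀ i j, IsUnitaryMat (V i j))
    (hVG : ∀ i j, IsGSymm u (V i j))
    (hVsupp : ∀ i j, SupportedOn (Metric.closedBall (c i j) lam) (V i j))
    (hVdisj : ∀ i (j j' : Fin (m i)), j ≠ j' →
      Disjoint (Metric.closedBall (c i j) lam) (Metric.closedBall (c i j') lam))
    -- the two thickened boundaries do not intersect
    (hempty : thickBd (2 * n * lam) A ∩ thickBd (2 * n * lam + ξ) B = ∅) :
    Ω A B ((List.ofFn (fun i : Fin n => (List.ofFn (V i.rev)).prod)).prod * U) =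
      Ω A B U :=
  flow_removal_FDLU_general hd u Ω hΩ1 hΩ2 A B ξ lam hlam U hU hUG n m c V hVunit hVG hVsupp hVdisj
    hempty
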